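/- arXiv:2204.11354 — 4 statements merged into one kernel-verified Lean document; each statement's English description precedes it below -/
import Mathlib

section
/- Let l ≥ 0 be a natural number. In the polynomial ring ℤ_p[X], the element X^(p^l) - 1 lies in the ideal generated by the elements p^i · (X-1)^(l+1-i) for 0 ≤ i ≤ l. -/
/-!
Let `I l` be the ideal generated by `n ^ i * (a - 1) ^ (l + 1 - i)`, `i ≤ l`, so that
`I (l + 1) = (a - 1, n) * I l`. Writing `b = a ^ n ^ l`, we have
`a ^ n ^ (l + 1) - 1 = (b - 1) * (1 + b + ⋯ + b ^ (n - 1))`; the first factor lies in `I l` by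
induction, and the second is congruent to `n` modulo `b - 1`, hence modulo `a - 1`, so it lies in
`(a - 1, n)`.
-/

open Finset

variable {R : Type*} [CommRing R]

theorem geom_sum_pow_mem_span_sub_one_natCast (a : R) (m n : ℕ) :
    ∑ k ∈ range n, (a ^ m) ^ k ∈ Ideal.span {a - 1, (n : R)} := by
  have hdvd : a - 1 ∣ ∑ k ∈ range n, (a ^ m) ^ k - n := by
    rw [← one_geom_sum (R := R) n, ← sum_sub_distrib]
    refine dvd_sum fun k _ => ?_
    rw [one_pow, ← pow_mul]
    exact sub_one_dvd_pow_sub_one a _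
  rw [← sub_add_cancel (∑ k ∈ range n, (a ^ m) ^ k) (n : R)]
  refine add_mem ?_ (Ideal.subset_span (by simp))
  exact Ideal.span_mono (by simp) (Ideal.mem_span_singleton.mpr hdvd)

theorem span_sub_one_natCast_mul_span_le (a : R) (n l : ℕ) :
    Ideal.span {a - 1, (n : R)} *
        Ideal.span {f : R | ∃ i ≤ l, f = (n : R) ^ i * (a - 1) ^ (l + 1 - i)} ≤
      Ideal.span {f : R | ∃ i ≤ l + 1, f = (n : R) ^ i * (a - 1) ^ (l + 1 + 1 - i)} := by
  rw [Ideal.span_mul_span']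
  refine Ideal.span_mono ?_
  rintro _ ⟨x, hx, _, ⟨i, hi, rfl⟩, rfl⟩
  rcases hx with rfl | rfl
  · refine ⟨i, by omega, ?_⟩
    rw [show l + 1 + 1 - i = l + 1 - i + 1 by omega]
    ring
  · exact ⟨i + 1, by omega, by rw [show l + 1 + 1 - (i + 1) = l + 1 - i by omega]; ring⟩

theorem pow_pow_sub_one_mem_span (a : R) (n l : ℕ) :
    a ^ n ^ l - 1 ∈ Ideal.span {f : R | ∃ i ≤ l, f = (n : R) ^ i * (a - 1) ^ (l + 1 - i)} := by
  induction l with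
  | zero => exact Ideal.subset_span ⟨0, le_rfl, by simp⟩
  | succ l ih =>
    have hfactor : a ^ n ^ (l + 1) - 1 =
        (∑ k ∈ range n, (a ^ n ^ l) ^ k) * (a ^ n ^ l - 1) := by
      rw [geom_sum_mul, pow_succ, pow_mul]
    rw [hfactor]
    exact span_sub_one_natCast_mul_span_le a n l
      (Ideal.mul_mem_mul (geom_sum_pow_mem_span_sub_one_natCast a _ n) ih)

/-- For a prime `p` and `l ≥ 0`, in `ℤ_p[X]` the element
`X^(p^l) - 1` lies in the ideal generated by `p^i * (X - 1)^(l+1-i)` for `0 ≤ i ≤ l`. -/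
theorem stmt_0 (p : ℕ) [Fact p.Prime] (l : ℕ) :
    (Polynomial.X ^ p ^ l - 1 : Polynomial ℤ_[p]) ∈
      Ideal.span {f : Polynomial ℤ_[p] | ∃ i ≤ l,
        f = (p : Polynomial ℤ_[p]) ^ i * (Polynomial.X - 1) ^ (l + 1 - i)} :=
  pow_pow_sub_one_mem_span Polynomial.X p l
end

section
/- An increasing union of a chain of subrings of a field, each of which is a principal ideal domain, is a Prüfer domain (i.e., every nonzero finitely generated ideal is invertible; equivalently every torsion-free module over it is flat). -/
/-! Being Bézout passes to directed unions of subrings, since any two elements already lie in a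
common member of the chain, where the ideal they generate is principal. Each PID is Bézout, and in
a Bézout domain a nonzero finitely generated ideal is principal, hence invertible. -/

open nonZeroDivisors

theorem Subring.isBezout_iSup_of_directed {K ι : Type*} [CommRing K] [Nonempty ι]
    {R : ι → Subring K} (hR : Directed (· ≤ ·) R) [∀ i, IsBezout (R i)] :
    IsBezout ↥(⨆ i, R i) := by
  rw [IsBezout.iff_span_pair_isPrincipal]
  rintro ⟨x, hx⟩ ⟨y, hy⟩
  obtain ⟨i, hxi⟩ := (Subring.mem_iSup_of_directed hR).mp hx
  obtain ⟨j, hyj⟩ := (Subring.mem_iSup_of_directed hR).mp hy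
  obtain ⟨k, hik, hjk⟩ := hR i j
  obtain ⟨g, hg⟩ := IsBezout.span_pair_isPrincipal (⟨x, hik hxi⟩ : R k) ⟨y, hjk hyj⟩
  let φ : R k →+* ↥(⨆ i, R i) := Subring.inclusion (le_iSup R k)
  refine ⟨φ g, ?_⟩
  have hmap := congrArg (Ideal.map φ) hg
  simp only [Ideal.map_span, Set.image_insert_eq, Set.image_singleton, Ideal.submodule_span_eq]
    at hmap
  exact hmap

theorem IsBezout.exists_coeIdeal_mul_eq_one {A K : Type*} [CommRing A] [IsDomain A] [IsBezout A]
    [Field K] [Algebra A K] [IsFractionRing A K] {I : Ideal A} (hI : I.FG) (hne : I ≠ ⊥) :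
    ∃ J : FractionalIdeal A⁰ K, (I : FractionalIdeal A⁰ K) * J = 1 := by
  obtain ⟨g, rfl⟩ := (IsBezout.isPrincipal_of_FG I hI).principal
  rw [Ideal.submodule_span_eq] at hne ⊢
  exact ⟨_, FractionalIdeal.coe_ideal_span_singleton_mul_inv K
    (mt Ideal.span_singleton_eq_bot.mpr hne)⟩

/-- An increasing union of a chain of subrings of a field, each of which is
a principal ideal domain, is a Prüfer domain: every nonzero finitely generated ideal of the
union is invertible as a fractional ideal. -/
theorem stmt_1 {K : Type*} [Field K] (R : ℕ → Subring K) (hmono : Monotone R)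
    (hPID : ∀ n, IsPrincipalIdealRing (R n))
    (I : Ideal ↥(⨆ n, R n)) (hFG : I.FG) (hne : I ≠ ⊥) :
    ∃ J : FractionalIdeal (nonZeroDivisors ↥(⨆ n, R n)) (FractionRing ↥(⨆ n, R n)),
      (I : FractionalIdeal (nonZeroDivisors ↥(⨆ n, R n)) (FractionRing ↥(⨆ n, R n))) * J = 1 := by
  have : IsBezout ↥(⨆ n, R n) := Subring.isBezout_iSup_of_directed hmono.directed_le
  exact IsBezout.exists_coeIdeal_mul_eq_one hFG hne
end

section
/- Let R be a principal ideal domain with a group Γ acting on Spec R (i.e. on R by ring automorphisms), let R₀ ⊆ R be a Γ-stable subring such that R is flat over R₀, and let N ⊆ M be an injection of R-modules with M finite free, arising as M = R ⊗_{R₀} M₀ → M for a torsion-free R₀-module M₀. Suppose: (1) the cokernel C of N → M is supported at finitely many maximal ideals of R; (2) the set of these maximal ideals is permuted by Γ; (3) the only maximal ideal of R with finite Γ-orbit is a fixed ideal m₀; (4) the m₀-adic completion of N → M is an isomorphism. Then C = 0 and N → M is an isomorphism. -/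
/-!
Completing the exact sequence `N → M → C → 0` at `m₀` shows that `C = m₀ C`, so by Nakayama
some `r ≡ 1 mod m₀` kills `C`; hence `m₀` is not in the support of `C`. On the other hand every
maximal ideal in the support has a finite `Γ`-orbit, since the finite support is `Γ`-stable, so it
equals `m₀`. The support is therefore empty and `C = 0`.
-/

namespace AdicCompletion

variable {R : Type*} [CommRing R] (I : Ideal R) {M N : Type*} [AddCommGroup M] [Module R M]
  [AddCommGroup N] [Module R N]

theorem subsingleton_cokernel_of_map_surjective {f : M →ₗ[R] N}
    (hf : Function.Surjective (map I f)) :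
    Subsingleton (AdicCompletion I (N ⧸ LinearMap.range f)) := by
  have hmkQ_comp : (LinearMap.range f).mkQ ∘ₗ f = 0 :=
    LinearMap.ext fun x => (Submodule.Quotient.mk_eq_zero _).2 ⟨x, rfl⟩
  refine subsingleton_of_forall_eq 0 fun c => ?_
  obtain ⟨y, rfl⟩ := map_surjective I (Submodule.mkQ_surjective _) c
  obtain ⟨x, rfl⟩ := hf y
  rw [map_comp_apply, hmkQ_comp, map_zero, LinearMap.zero_apply]

theorem top_le_smul_top_of_subsingleton [Subsingleton (AdicCompletion I M)] :
    (⊤ : Submodule R M) ≤ I • ⊤ := by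
  intro x _
  have hx : eval I M 1 (of I M x) = 0 := by rw [Subsingleton.elim (of I M x) 0, _root_.map_zero]
  rw [eval_of, Submodule.mkQ_apply, Submodule.Quotient.mk_eq_zero, pow_one] at hx
  exact hx

end AdicCompletion

theorem Ideal.sup_annihilator_eq_top_of_top_le_smul {R C : Type*} [CommRing R] [AddCommGroup C]
    [Module R C] [Module.Finite R C] {I : Ideal R} (hC : ⊤ ≤ I • (⊤ : Submodule R C)) :
    I ⊔ Module.annihilator R C = ⊤ := by
  obtain ⟨r, hr1, hr⟩ := Submodule.exists_sub_one_mem_and_smul_eq_zero_of_fg_of_le_smul I ⊤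
    Module.Finite.fg_top hC
  have hr_ann : r ∈ Module.annihilator R C := Module.mem_annihilator.2 fun x => hr x trivial
  rw [Ideal.eq_top_iff_one]
  simpa using Ideal.sub_mem _ (Ideal.mem_sup_right hr_ann) (Ideal.mem_sup_left hr1)

theorem Module.exists_isMaximal_of_ne_zero (R : Type*) {C : Type*} [CommRing R] [AddCommGroup C]
    [Module R C] {x : C} (hx : x ≠ 0) :
    ∃ m : Ideal R, m.IsMaximal ∧ ∀ r : R, r • x = 0 → r ∈ m := by
  have hne : LinearMap.ker (LinearMap.toSpanSingleton R C x) ≠ ⊤ := by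
    intro h
    have h_one : (1 : R) ∈ LinearMap.ker (LinearMap.toSpanSingleton R C x) := h ▸ Submodule.mem_top
    exact hx (by simpa using h_one)
  obtain ⟨m, hm, hle⟩ := Ideal.exists_le_maximal _ hne
  exact ⟨m, hm, fun r hr => hle hr⟩

theorem stmt_16_general {R : Type*} [CommRing R]
    {Γ : Type*} [Group Γ] (ρ : Γ →* RingAut R)
    {R₀ : Type*} [CommRing R₀] [Algebra R₀ R]
    {M₀ : Type*} [AddCommGroup M₀] [Module R₀ M₀]
    {M : Type*} [AddCommGroup M] [Module R M] [Module.Finite R M]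
    (f : TensorProduct R₀ R M₀ →ₗ[R] M)
    (hf : Function.Injective f)
    (m₀ : Ideal R)
    (supp : Set (Ideal R))
    (hsupp : supp = {m : Ideal R | m.IsMaximal ∧ ∃ x : M ⧸ LinearMap.range f,
      x ≠ 0 ∧ ∀ r : R, r • x = 0 → r ∈ m})
    (h1 : supp.Finite)
    (h2 : ∀ g : Γ, ∀ m ∈ supp, Ideal.map (ρ g : R ≃+* R).toRingHom m ∈ supp)
    (h3 : ∀ m : Ideal R, m.IsMaximal →
      (Set.range fun g : Γ => Ideal.map (ρ g : R ≃+* R).toRingHom m).Finite → m = m₀)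
    (h4 : Function.Bijective (AdicCompletion.map m₀ f)) :
    Function.Bijective f := by
  have hC : ⊤ ≤ m₀ • (⊤ : Submodule R (M ⧸ LinearMap.range f)) :=
    haveI := AdicCompletion.subsingleton_cokernel_of_map_surjective m₀ h4.2
    AdicCompletion.top_le_smul_top_of_subsingleton m₀
  have hsupp_m₀ : ∀ m ∈ supp, m = m₀ := fun m hm =>
    h3 m (hsupp ▸ hm).1 (h1.subset (Set.range_subset_iff.2 fun g => h2 g m hm))
  refine ⟨hf, LinearMap.range_eq_top.1 ?_⟩
  by_contra hne
  have := (Submodule.Quotient.nontrivial_iff (p := LinearMap.range f)).2 hne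
  obtain ⟨x, hx⟩ := exists_ne (0 : M ⧸ LinearMap.range f)
  obtain ⟨m, hm, hann⟩ := Module.exists_isMaximal_of_ne_zero R hx
  obtain rfl : m = m₀ := hsupp_m₀ m (hsupp ▸ ⟨hm, x, hx, hann⟩)
  refine hm.ne_top (eq_top_iff.2 ?_)
  rw [← Ideal.sup_annihilator_eq_top_of_top_le_smul hC]
  exact sup_le le_rfl fun r hr => hann r (Module.mem_annihilator.1 hr _)

/-- geometric descent argument.  Let `R` be a PID with a group `Γ`
acting by ring automorphisms, `R₀ ⊆ R` a `Γ`-stable subring over which `R` is flat, `M₀`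
a torsion-free `R₀`-module, and `f : R ⊗_{R₀} M₀ → M` an injective map of `R`-modules
with `M` finite free.  Suppose: (1) the cokernel of `f` is supported at a finite set
`supp` of maximal ideals; (2) `supp` is permuted by `Γ`; (3) the only maximal ideal with
finite `Γ`-orbit is `m₀`; (4) the `m₀`-adic completion of `f` is an isomorphism.  Then
the cokernel vanishes and `f` is an isomorphism. -/
theorem stmt_16 {R : Type*} [CommRing R] [IsDomain R] [IsPrincipalIdealRing R]
    {Γ : Type*} [Group Γ] (ρ : Γ →* RingAut R)
    {R₀ : Type*} [CommRing R₀] [Algebra R₀ R] [Module.Flat R₀ R]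
    (hstable : ∀ (g : Γ) (x : R₀), ∃ y : R₀, ρ g (algebraMap R₀ R x) = algebraMap R₀ R y)
    {M₀ : Type*} [AddCommGroup M₀] [Module R₀ M₀]
    (hM₀tf : ∀ (r : R₀) (m : M₀), r • m = 0 → r = 0 ∨ m = 0)
    {M : Type*} [AddCommGroup M] [Module R M] [Module.Finite R M] [Module.Free R M]
    (f : TensorProduct R₀ R M₀ →ₗ[R] M)
    (hf : Function.Injective f)
    (m₀ : Ideal R) (hm₀ : m₀.IsMaximal)
    (supp : Set (Ideal R))
    (hsupp : supp = {m : Ideal R | m.IsMaximal ∧ ∃ x : M ⧸ LinearMap.range f,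
      x ≠ 0 ∧ ∀ r : R, r • x = 0 → r ∈ m})
    (h1 : supp.Finite)
    (h2 : ∀ g : Γ, ∀ m ∈ supp, Ideal.map (ρ g : R ≃+* R).toRingHom m ∈ supp)
    (h3 : ∀ m : Ideal R, m.IsMaximal →
      (Set.range fun g : Γ => Ideal.map (ρ g : R ≃+* R).toRingHom m).Finite → m = m₀)
    (h4 : Function.Bijective (AdicCompletion.map m₀ f)) :
    Function.Bijective f :=
  stmt_16_general ρ f hf m₀ supp hsupp h1 h2 h3 h4
end

section
/- Let A ⊆ B be an inclusion of rings such that B = ⋃_{n≥0} φ^{-n}(A) for a ring automorphism φ of B with φ(A) ⊆ A, where each φ^{-n}(A) is a Bézout domain. Then every finite free B-module M with a φ-semilinear bijection Φ: M → M satisfying Φ(bm) = φ(b)Φ(m) and admitting a basis with Mat(Φ) ∈ GL_d(B), is isomorphic to A ⊗_{A} M₀ for a finite free A-module M₀: namely, if e_1,...,e_d is a B-basis of M defined over φ^{-n}(A), then Φ^n(e_1),...,Φ^n(e_d) is a basis of M defined over A. -/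
/-!
A bijection `Φ` that is semilinear over a ring automorphism `φ` has `φ ^ n`-semilinear
bijective iterates `Φ^[n]`, and such a map carries bases to bases. If `Φ (e j) = ∑ i, P i j • e i`,
then applying `Φ^[n]` gives `Φ (Φ^[n] (e j)) = ∑ i, φ ^ n (P i j) • Φ^[n] (e i)`, so in the
basis `Φ^[n] ∘ e` the matrix of `Φ` is `P` with `φ ^ n` applied entrywise.
-/

open Function

theorem iterate_map_smulₛₗ {R M : Type*} [SMul R M] {σ : R → R} {f : M → M}
    (hf : ∀ (r : R) (m : M), f (r • m) = σ r • f m) (k : ℕ) (r : R) (m : M) :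
    f^[k] (r • m) = σ^[k] r • f^[k] m := by
  induction k with
  | zero => rfl
  | succ k ih => rw [iterate_succ_apply', iterate_succ_apply', iterate_succ_apply', ih, hf]

namespace Module.Basis

variable {ι R R' M M' : Type*} [Semiring R] [Semiring R'] [AddCommMonoid M] [Module R M]
  [AddCommMonoid M'] [Module R' M']

noncomputable def mapₛₗ (b : Basis ι R M) {σ : R → R'} (hσ : Surjective σ) {f : M →+ M'}
    (hf : Bijective f) (hsmul : ∀ (r : R) (m : M), f (r • m) = σ r • f m) : Basis ι R' M' :=
  Basis.mk (b.linearIndependent.map_of_surjective_injectiveₛ σ f hσ hf.injective hsmul) <| by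
    rintro _ -
    obtain ⟨x, rfl⟩ := hf.surjective ‹M'›
    refine Submodule.span_induction (p := fun x _ ↦ f x ∈ Submodule.span R' (Set.range (f ∘ b)))
      ?_ ?_ ?_ ?_ (b.mem_span x)
    · rintro _ ⟨i, rfl⟩
      exact Submodule.subset_span ⟨i, rfl⟩
    · simp
    · intro _ _ _ _ hx hy
      simpa using add_mem hx hy
    · intro r _ _ hx
      simpa [hsmul] using Submodule.smul_mem _ (σ r) hx

@[simp]
theorem coe_mapₛₗ (b : Basis ι R M) {σ : R → R'} (hσ : Surjective σ) {f : M →+ M'}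
    (hf : Bijective f) (hsmul : ∀ (r : R) (m : M), f (r • m) = σ r • f m) :
    ⇑(b.mapₛₗ hσ hf hsmul) = f ∘ b :=
  Basis.coe_mk _ _

end Module.Basis

theorem stmt_19_general {B : Type*} [CommRing B]
    (A : Subring B) (φ : RingAut B)
    {M : Type*} [AddCommGroup M] [Module B M]
    (Φ : M ≃+ M)
    (hΦ : ∀ (b : B) (m : M), Φ (b • m) = φ b • Φ m)
    {d : ℕ} (e : Module.Basis (Fin d) B M)
    (P : Matrix (Fin d) (Fin d) B)
    (hP : ∀ j, Φ (e j) = ∑ i, P i j • e i)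
    (n : ℕ) (hPA : ∀ i j, (φ ^ n) (P i j) ∈ A) :
    ∃ b : Module.Basis (Fin d) B M, (∀ j, b j = (⇑Φ)^[n] (e j)) ∧
      ∀ j, ∃ Q : Fin d → B, (∀ i, Q i ∈ A) ∧ Φ (b j) = ∑ i, Q i • b i := by
  have hsmul : ∀ (r : B) (m : M), (⇑Φ)^[n] (r • m) = (φ ^ n) r • (⇑Φ)^[n] m := by
    rw [RingAut.coe_pow]
    exact iterate_map_smulₛₗ hΦ n
  let Ψ : M →+ M := AddMonoidHom.mk' (⇑Φ)^[n] (iterate_map_add Φ n)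
  let b := e.mapₛₗ (φ ^ n).surjective (f := Ψ) (Φ.bijective.iterate n) hsmul
  have hb : ∀ j, b j = (⇑Φ)^[n] (e j) := fun j ↦ congrFun (e.coe_mapₛₗ (f := Ψ) _ _ hsmul) j
  refine ⟨b, hb, fun j ↦ ⟨fun i ↦ (φ ^ n) (P i j), fun i ↦ hPA i j, ?_⟩⟩
  calc Φ (b j) = (⇑Φ)^[n] (Φ (e j)) := by rw [hb, Commute.self_iterate Φ n (e j)]
    _ = Ψ (∑ i, P i j • e i) := by rw [hP]; rfl
    _ = ∑ i, (φ ^ n) (P i j) • b i := by simp only [map_sum, Ψ, AddMonoidHom.mk'_apply, hsmul, hb]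

/-- descent along Frobenius.  Let `B = ⋃_n φ^{-n}(A)` for a ring
automorphism `φ` of `B` with `φ(A) ⊆ A`, each `φ^{-n}(A)` a Bézout domain.  Let `M` be a
finite free `B`-module with a `φ`-semilinear bijection `Φ` whose matrix in a basis `e` lies
in `GL_d(B)` with entries in `φ^{-n}(A)`.  Then `Φ^n(e₁), …, Φ^n(e_d)` is a `B`-basis of
`M` which is defined over `A`: `Φ` sends each `Φ^n(e_j)` to an `A`-linear combination of
the `Φ^n(e_i)` (so `M` descends to a finite free module over `A`). -/
theorem stmt_19 {B : Type*} [CommRing B] [IsDomain B]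
    (A : Subring B) (φ : RingAut B)
    (hφA : ∀ a ∈ A, φ a ∈ A)
    (hunion : ∀ b : B, ∃ n : ℕ, (φ ^ n) b ∈ A)
    (hBezout : ∀ n : ℕ, IsBezout ↥(Subring.comap (φ ^ n : RingAut B).toRingHom A))
    {M : Type*} [AddCommGroup M] [Module B M]
    (Φ : M ≃+ M)
    (hΦ : ∀ (b : B) (m : M), Φ (b • m) = φ b • Φ m)
    {d : ℕ} (e : Module.Basis (Fin d) B M)
    (P : Matrix (Fin d) (Fin d) B)
    (hP : ∀ j, Φ (e j) = ∑ i, P i j • e i)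
    (hGL : IsUnit P)
    (n : ℕ) (hPA : ∀ i j, (φ ^ n) (P i j) ∈ A) :
    ∃ b : Module.Basis (Fin d) B M, (∀ j, b j = (⇑Φ)^[n] (e j)) ∧
      ∀ j, ∃ Q : Fin d → B, (∀ i, Q i ∈ A) ∧ Φ (b j) = ∑ i, Q i • b i :=
  stmt_19_general A φ Φ hΦ e P hP n hPA
end
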